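/- Let k and l be positive integers with k ≠ l. Then η₁, η₂, η₃ are pairwise distinct, nonzero, purely imaginary complex numbers satisfying η_j³ + η_j = i·p for j = 1,2,3 (equivalently, (X−η₁)(X−η₂)(X−η₃) = X³ + X − i·p as polynomials over ℂ); moreover, if k ≡ l (mod 3), then exp(η_j·L) = 1 for j = 1,2,3. -/

import Mathlib

noncomputable section

/-- `n = k² + k·l + l²` as a real number. -/
def nR (k l : ℕ) : ℝ := ((k ^ 2 + k * l + l ^ 2 : ℕ) : ℝ)

/-- The critical length `L = 2π√(n/3)`. -/
def LL (k l : ℕ) : ℝ := 2 * Real.pi * Real.sqrt (nR k l / 3)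

/-- `p = (2k+l)(k−l)(2l+k)/(3√3 n^{3/2})`. -/
def pK (k l : ℕ) : ℝ :=
  ((2 * k + l : ℕ) : ℝ) * ((k : ℝ) - (l : ℝ)) * ((2 * l + k : ℕ) : ℝ) /
    (3 * Real.sqrt 3 * nR k l ^ ((3 : ℝ) / 2))

/-- `η₁ = −(2πi/(3L))·(2k+l)`. -/
def eta1 (k l : ℕ) : ℂ :=
  -(2 * (Real.pi : ℂ) * Complex.I / (3 * ((LL k l : ℝ) : ℂ))) * ((2 * k + l : ℕ) : ℂ)

/-- `η₂ = η₁ + 2πi·k/L`. -/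
def eta2 (k l : ℕ) : ℂ :=
  eta1 k l + 2 * (Real.pi : ℂ) * Complex.I * (k : ℂ) / ((LL k l : ℝ) : ℂ)

/-- `η₃ = η₂ + 2πi·l/L`. -/
def eta3 (k l : ℕ) : ℂ :=
  eta2 k l + 2 * (Real.pi : ℂ) * Complex.I * (l : ℂ) / ((LL k l : ℝ) : ℂ)

end

/-!
Writing `x₁ = -(2k+l)`, `x₂ = k-l`, `x₃ = k+2l`, each `η_j` equals `2πi·x_j/(3L)`, so the `η_j` are
purely imaginary, pairwise distinct and nonzero exactly as the integers `x_j` are. Since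
`L = 2π√(n/3)`, such a number is `ia` with `a = x/(√3·√n)`, so `η³ + η = i(a - a³)` with
`a - a³ = (3nx - x³)/(3√3·n^{3/2})`; and `x₁, x₂, x₃` are the three roots of
`X³ - 3nX + (2k+l)(k-l)(2l+k)`. Finally `η_j·L = 2πi·x_j/3`, and `3 ∣ x_j` when `k ≡ l [MOD 3]`.
-/

open Complex Real

noncomputable def etaOf (L : ℝ) (x : ℤ) : ℂ := 2 * π * I * x / (3 * L)

section etaOf

variable {L : ℝ}

theorem etaOf_eq_I_mul (x : ℤ) : etaOf L x = I * ((2 * π * x / (3 * L) : ℝ) : ℂ) := by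
  rw [etaOf]; push_cast; ring

theorem etaOf_re (x : ℤ) : (etaOf L x).re = 0 := by
  rw [etaOf_eq_I_mul, I_mul_re, ofReal_im, neg_zero]

theorem etaOf_injective (hL : L ≠ 0) : Function.Injective (etaOf L) := by
  intro x y h
  have hπ : (π : ℂ) ≠ 0 := ofReal_ne_zero.mpr pi_ne_zero
  have hL' : (L : ℂ) ≠ 0 := ofReal_ne_zero.mpr hL
  rw [etaOf, etaOf, div_left_inj' (by simpa using hL'), mul_right_inj' (by simp [hπ])] at h
  exact_mod_cast h

theorem etaOf_ne_zero (hL : L ≠ 0) {x : ℤ} (hx : x ≠ 0) : etaOf L x ≠ 0 := by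
  simpa [etaOf] using (etaOf_injective hL).ne hx

theorem exp_etaOf_mul_eq_one (hL : L ≠ 0) {x : ℤ} (hx : 3 ∣ x) : exp (etaOf L x * L) = 1 := by
  obtain ⟨m, rfl⟩ := hx
  have hL' : (L : ℂ) ≠ 0 := ofReal_ne_zero.mpr hL
  have : etaOf L (3 * m) * L = m * (2 * π * I) := by
    rw [etaOf]; push_cast; field_simp
  rw [this, exp_int_mul_two_pi_mul_I]

theorem I_mul_ofReal_pow_three_add (a : ℝ) : (I * a) ^ 3 + I * a = I * ((a - a ^ 3 : ℝ) : ℂ) := by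
  push_cast
  linear_combination (a ^ 3 * I : ℂ) * I_sq

theorem sub_pow_three_div_critical_length {n : ℝ} (hn : 0 < n) (x : ℝ) :
    let a := 2 * π * x / (3 * (2 * π * √(n / 3)))
    a - a ^ 3 = (3 * n * x - x ^ 3) / (3 * √3 * n ^ ((3 : ℝ) / 2)) := by
  have h32 : n ^ ((3 : ℝ) / 2) = n * √n := by
    rw [show (3 : ℝ) / 2 = 1 + 1 / 2 by norm_num, rpow_add hn, rpow_one, sqrt_eq_rpow]
  have hs3 : √3 ^ 2 = 3 := sq_sqrt (by norm_num)
  have hsn : √n ^ 2 = n := sq_sqrt hn.le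
  have : 0 < √n := sqrt_pos.mpr hn
  rw [h32, sqrt_div hn.le]
  field_simp
  rw [hs3, hsn]
  ring

theorem etaOf_pow_three_add {n : ℝ} (hn : 0 < n) (x : ℤ) :
    etaOf (2 * π * √(n / 3)) x ^ 3 + etaOf (2 * π * √(n / 3)) x
      = I * (((3 * n * x - x ^ 3) / (3 * √3 * n ^ ((3 : ℝ) / 2)) : ℝ) : ℂ) := by
  rw [etaOf_eq_I_mul, I_mul_ofReal_pow_three_add, sub_pow_three_div_critical_length hn]

end etaOf

theorem eta1_eq_etaOf (k l : ℕ) : eta1 k l = etaOf (LL k l) (-(2 * k + l)) := by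
  rw [eta1, etaOf]; push_cast; ring

theorem eta2_eq_etaOf (k l : ℕ) : eta2 k l = etaOf (LL k l) (k - l) := by
  rw [eta2, eta1_eq_etaOf, etaOf, etaOf]; push_cast; ring

theorem eta3_eq_etaOf (k l : ℕ) : eta3 k l = etaOf (LL k l) (k + 2 * l) := by
  rw [eta3, eta2_eq_etaOf, etaOf, etaOf]; push_cast; ring

theorem nR_pos {k : ℕ} (hk : 0 < k) (l : ℕ) : 0 < nR k l := by
  unfold nR; positivity

theorem LL_ne_zero {k : ℕ} (hk : 0 < k) (l : ℕ) : LL k l ≠ 0 := by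
  have := nR_pos hk l
  unfold LL; positivity

theorem etaOf_LL_pow_three_add {k : ℕ} (hk : 0 < k) (l : ℕ) (x : ℤ)
    (hx : x ^ 3 - 3 * (k ^ 2 + k * l + l ^ 2) * x + (2 * k + l) * (k - l) * (2 * l + k) = 0) :
    etaOf (LL k l) x ^ 3 + etaOf (LL k l) x = I * ((pK k l : ℝ) : ℂ) := by
  rw [LL, etaOf_pow_three_add (nR_pos hk l), pK]
  congr 4
  have : (x : ℝ) ^ 3 - 3 * nR k l * x + (2 * k + l) * (k - l) * (2 * l + k) = 0 := by
    unfold nR; exact_mod_cast hx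
  push_cast
  linarith

theorem stmt_9 (k l : ℕ) (hk : 0 < k) (hl : 0 < l) (hkl : k ≠ l) :
    (eta1 k l ≠ eta2 k l ∧ eta1 k l ≠ eta3 k l ∧ eta2 k l ≠ eta3 k l) ∧
    (eta1 k l ≠ 0 ∧ eta2 k l ≠ 0 ∧ eta3 k l ≠ 0) ∧
    ((eta1 k l).re = 0 ∧ (eta2 k l).re = 0 ∧ (eta3 k l).re = 0) ∧
    (eta1 k l ^ 3 + eta1 k l = Complex.I * ((pK k l : ℝ) : ℂ) ∧
     eta2 k l ^ 3 + eta2 k l = Complex.I * ((pK k l : ℝ) : ℂ) ∧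
     eta3 k l ^ 3 + eta3 k l = Complex.I * ((pK k l : ℝ) : ℂ)) ∧
    (k ≡ l [MOD 3] →
      Complex.exp (eta1 k l * ((LL k l : ℝ) : ℂ)) = 1 ∧
      Complex.exp (eta2 k l * ((LL k l : ℝ) : ℂ)) = 1 ∧
      Complex.exp (eta3 k l * ((LL k l : ℝ) : ℂ)) = 1) := by
  have hL := LL_ne_zero hk l
  have inj : ∀ {x y : ℤ}, x ≠ y → etaOf (LL k l) x ≠ etaOf (LL k l) y := (etaOf_injective hL).ne
  rw [eta1_eq_etaOf, eta2_eq_etaOf, eta3_eq_etaOf]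
  refine ⟨⟨inj (by omega), inj (by omega), inj (by omega)⟩,
    ⟨etaOf_ne_zero hL (by omega), etaOf_ne_zero hL (by omega), etaOf_ne_zero hL (by omega)⟩,
    ⟨etaOf_re _, etaOf_re _, etaOf_re _⟩,
    ⟨etaOf_LL_pow_three_add hk l _ (by ring), etaOf_LL_pow_three_add hk l _ (by ring),
      etaOf_LL_pow_three_add hk l _ (by ring)⟩, fun hmod => ?_⟩
  have hmod : k % 3 = l % 3 := hmod
  exact ⟨exp_etaOf_mul_eq_one hL (by omega), exp_etaOf_mul_eq_one hL (by omega),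
    exp_etaOf_mul_eq_one hL (by omega)⟩
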